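/- Let F = diag(f₁,f₂,f₃) with f_i ≥ 0, P ∈ SO(3), Φ = (1/2) tr(F(I − P)), and e_P = (1/2)(FP − PᵀF)^∨. Then with h₁ = min{f₁+f₂, f₂+f₃, f₃+f₁}, h₂ = max{(f₁−f₂)², (f₂−f₃)², (f₃−f₁)²}, h₃ = max{(f₁+f₂)², (f₂+f₃)², (f₃+f₁)²}, the lower bound (h₁/(h₂+h₃)) ‖e_P‖² ≤ Φ holds. -/

import Mathlib

open Matrix

/-- The vee map, inverse of the hat map on skew-symmetric matrices. -/
def vee (S : Matrix (Fin 3) (Fin 3) ℝ) : Fin 3 → ℝ :=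
  ![S 2 1, S 0 2, S 1 0]

/-- Euclidean norm on `ℝ³`. -/
noncomputable def enorm (v : Fin 3 → ℝ) : ℝ := Real.sqrt (v ⬝ᵥ v)

/-!
For each cyclic `(i, j, k)`, `4 (e_P)_i = (f_j + f_k) (P_kj - P_jk) + (f_k - f_j) (P_kj + P_jk)`.
Orthogonality makes `P_kj² - P_jk²` independent of `i`, so the cross terms cancel in `‖e_P‖²`.
For a rotation the weights `w_i = 1 + P_ii - P_jj - P_kk` satisfy `(P_kj - P_jk)² ≤ 4 w_i`
(Cauchy–Schwarz on the rows of `1 - P`, plus `P_ii` being its own cofactor), and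
`(P_kj + P_jk)² ≤ 4 (1 - P_ii) = 2 (w_j + w_k)`, while `4 Φ = ∑ (f_j + f_k) w_i`.
Bounding `f_j + f_k` below by `h₁` and the squared coefficients above by `h₃` and `h₂`
gives `h₁ ‖e_P‖² ≤ (h₂ + h₃) Φ`.
-/

namespace Matrix

variable {n R : Type*} [Fintype n] [DecidableEq n] [CommRing R]

theorem sum_apply_mul_apply_of_mem_orthogonalGroup {P : Matrix n n R}
    (hP : P ∈ orthogonalGroup n R) (i j : n) :
    ∑ k, P i k * P j k = (1 : Matrix n n R) i j := by
  simp [← (mem_orthogonalGroup_iff n R).1 hP, mul_apply]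

theorem sum_apply_mul_apply_of_mem_orthogonalGroup' {P : Matrix n n R}
    (hP : P ∈ orthogonalGroup n R) (i j : n) :
    ∑ k, P k i * P k j = (1 : Matrix n n R) i j := by
  simp [← (mem_orthogonalGroup_iff' n R).1 hP, mul_apply]

theorem adjugate_eq_transpose_of_mem_specialOrthogonalGroup {P : Matrix n n R}
    (hP : P ∈ specialOrthogonalGroup n R) : adjugate P = Pᵀ := by
  obtain ⟨hO, hdet⟩ := mem_specialOrthogonalGroup_iff.1 hP
  calc adjugate P = Pᵀ * P * adjugate P := by rw [(mem_orthogonalGroup_iff' n R).1 hO, one_mul]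
    _ = Pᵀ := by rw [Matrix.mul_assoc, mul_adjugate, hdet, one_smul, Matrix.mul_one]

theorem submatrix_mem_specialOrthogonalGroup {P : Matrix n n R}
    (hP : P ∈ specialOrthogonalGroup n R) (e : n ≃ n) :
    P.submatrix e e ∈ specialOrthogonalGroup n R := by
  obtain ⟨hO, hdet⟩ := mem_specialOrthogonalGroup_iff.1 hP
  refine mem_specialOrthogonalGroup_iff.2 ⟨(mem_orthogonalGroup_iff' n R).2 ?_, ?_⟩
  · rw [transpose_submatrix, submatrix_mul_equiv, (mem_orthogonalGroup_iff' n R).1 hO,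
      submatrix_one_equiv]
  · rw [det_submatrix_equiv_self, hdet]

theorem add_sq_le_of_mem_orthogonalGroup {P : Matrix n n ℝ} (hP : P ∈ orthogonalGroup n ℝ)
    {i j : n} (hij : i ≠ j) : (P i j + P j i) ^ 2 ≤ 4 * (1 - P i i) * (1 - P j j) := by
  have hgram (a b : n) :
      ∑ k, (1 - P) a k * (1 - P) b k = 2 * (1 : Matrix n n ℝ) a b - P a b - P b a := by
    simp only [sub_apply, one_apply, mul_sub, mul_ite, mul_one, mul_zero, sub_mul, ite_mul,
      one_mul, zero_mul, Finset.sum_sub_distrib, Finset.sum_ite_eq, Finset.mem_univ, ↓reduceIte,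
      sum_apply_mul_apply_of_mem_orthogonalGroup hP]
    split_ifs <;> ring
  have hcs := Finset.sum_mul_sq_le_sq_mul_sq Finset.univ ((1 - P) i) ((1 - P) j)
  simp only [sq, hgram, one_apply_eq, one_apply_ne hij] at hcs
  linear_combination hcs

theorem trace_diagonal_mul_one_sub_nonneg {P : Matrix n n ℝ} (hP : P ∈ orthogonalGroup n ℝ)
    {f : n → ℝ} (hf : ∀ i, 0 ≤ f i) : 0 ≤ (diagonal f * (1 - P)).trace := by
  simp only [trace, diag, diagonal_mul, sub_apply, one_apply_eq]
  exact Finset.sum_nonneg fun i _ ↦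
    mul_nonneg (hf i) (sub_nonneg.2 (abs_le.1 (entry_norm_bound_of_unitary hP i i)).2)

end Matrix

theorem mul_sq_mul_le_mul_mul {h g H x y : ℝ} (hh : 0 ≤ h) (hg : h ≤ g) (hH : g ^ 2 ≤ H)
    (hx : 0 ≤ x) (hxy : x ≤ y) : h * (g ^ 2 * x) ≤ H * (g * y) := by
  have hg0 : 0 ≤ g := hh.trans hg
  calc h * (g ^ 2 * x) = (h * g) * (g * x) := by ring
    _ ≤ g ^ 2 * (g * x) := by gcongr; nlinarith
    _ ≤ H * (g * y) := by gcongr; exact (sq_nonneg g).trans hH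

local notation "SO(3)" => Matrix.specialOrthogonalGroup (Fin 3) ℝ

namespace SO3

variable {P : Matrix (Fin 3) (Fin 3) ℝ}

theorem rotate_mem (hP : P ∈ SO(3)) (i : Fin 3) : P.submatrix (i + ·) (i + ·) ∈ SO(3) :=
  submatrix_mem_specialOrthogonalGroup hP (Equiv.addLeft i)

theorem apply_zero_zero (hP : P ∈ SO(3)) : P 0 0 = P 1 1 * P 2 2 - P 1 2 * P 2 1 := by
  simpa [adjugate_fin_three, eq_comm] using
    congrFun (congrFun (adjugate_eq_transpose_of_mem_specialOrthogonalGroup hP) 0) 0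

theorem apply_self (hP : P ∈ SO(3)) (i : Fin 3) :
    P i i = P (i + 1) (i + 1) * P (i + 2) (i + 2) - P (i + 1) (i + 2) * P (i + 2) (i + 1) := by
  simpa using apply_zero_zero (rotate_mem hP i)

theorem sub_sq_le (hP : P ∈ SO(3)) (i : Fin 3) :
    (P (i + 2) (i + 1) - P (i + 1) (i + 2)) ^ 2 ≤
      4 * (1 + P i i - P (i + 1) (i + 1) - P (i + 2) (i + 2)) := by
  have hcs := add_sq_le_of_mem_orthogonalGroup hP.1 (i := i + 1) (j := i + 2) (by simp)
  linear_combination hcs - 4 * apply_self hP i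

theorem add_sq_le (hP : P ∈ SO(3)) (i : Fin 3) :
    (P (i + 2) (i + 1) + P (i + 1) (i + 2)) ^ 2 ≤ 4 * (1 - P i i) := by
  have hQ := rotate_mem hP i
  have row1 := sum_apply_mul_apply_of_mem_orthogonalGroup hQ.1 1 1
  have row2 := sum_apply_mul_apply_of_mem_orthogonalGroup hQ.1 2 2
  simp only [submatrix_apply, Fin.sum_univ_three, add_zero, one_apply_eq] at row1 row2
  linear_combination 2 * row1 + 2 * row2 + 4 * apply_self hP i
    + 2 * sq_nonneg (P (i + 1) i) + 2 * sq_nonneg (P (i + 2) i)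
    + 2 * sq_nonneg (P (i + 1) (i + 1) - P (i + 2) (i + 2))
    + sq_nonneg (P (i + 1) (i + 2) + P (i + 2) (i + 1))

theorem four_mul_sum_sq_eq (hP : P ∈ SO(3)) (f1 f2 f3 : ℝ) :
    4 * ((f3 * P 2 1 - f2 * P 1 2) ^ 2 + (f1 * P 0 2 - f3 * P 2 0) ^ 2
        + (f2 * P 1 0 - f1 * P 0 1) ^ 2) =
      (f2 + f3) ^ 2 * (P 2 1 - P 1 2) ^ 2 + (f3 + f1) ^ 2 * (P 0 2 - P 2 0) ^ 2
        + (f1 + f2) ^ 2 * (P 1 0 - P 0 1) ^ 2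
      + (f2 - f3) ^ 2 * (P 2 1 + P 1 2) ^ 2 + (f3 - f1) ^ 2 * (P 0 2 + P 2 0) ^ 2
        + (f1 - f2) ^ 2 * (P 1 0 + P 0 1) ^ 2 := by
  have r1 := sum_apply_mul_apply_of_mem_orthogonalGroup hP.1 1 1
  have r2 := sum_apply_mul_apply_of_mem_orthogonalGroup hP.1 2 2
  have c1 := sum_apply_mul_apply_of_mem_orthogonalGroup' hP.1 1 1
  have c2 := sum_apply_mul_apply_of_mem_orthogonalGroup' hP.1 2 2
  simp only [Fin.sum_univ_three, one_apply_eq] at r1 r2 c1 c2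
  linear_combination (2 * (f1 ^ 2 - f3 ^ 2)) * (c2 - r2) + (2 * (f2 ^ 2 - f1 ^ 2)) * (r1 - c1)

theorem mul_sum_sq_le (hP : P ∈ SO(3)) {f1 f2 f3 h1 h2 h3 : ℝ} (h1_nonneg : 0 ≤ h1)
    (hh1 : h1 ≤ f1 + f2 ∧ h1 ≤ f2 + f3 ∧ h1 ≤ f3 + f1)
    (hh2 : (f1 - f2) ^ 2 ≤ h2 ∧ (f2 - f3) ^ 2 ≤ h2 ∧ (f3 - f1) ^ 2 ≤ h2)
    (hh3 : (f1 + f2) ^ 2 ≤ h3 ∧ (f2 + f3) ^ 2 ≤ h3 ∧ (f3 + f1) ^ 2 ≤ h3) :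
    h1 * ((f3 * P 2 1 - f2 * P 1 2) ^ 2 + (f1 * P 0 2 - f3 * P 2 0) ^ 2
        + (f2 * P 1 0 - f1 * P 0 1) ^ 2) ≤
      2 * (h2 + h3) * (f1 * (1 - P 0 0) + f2 * (1 - P 1 1) + f3 * (1 - P 2 2)) := by
  obtain ⟨g2, g0, g1⟩ := hh1
  obtain ⟨d2, d0, d1⟩ := hh2
  obtain ⟨s2, s0, s1⟩ := hh3
  have h2_nonneg : 0 ≤ h2 := (sq_nonneg _).trans d0
  have A0 : (P 2 1 - P 1 2) ^ 2 ≤ 4 * (1 + P 0 0 - P 1 1 - P 2 2) := sub_sq_le hP 0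
  have A1 : (P 0 2 - P 2 0) ^ 2 ≤ 4 * (1 + P 1 1 - P 2 2 - P 0 0) := sub_sq_le hP 1
  have A2 : (P 1 0 - P 0 1) ^ 2 ≤ 4 * (1 + P 2 2 - P 0 0 - P 1 1) := sub_sq_le hP 2
  have B0 : (P 2 1 + P 1 2) ^ 2 ≤ 4 * (1 - P 0 0) := add_sq_le hP 0
  have B1 : (P 0 2 + P 2 0) ^ 2 ≤ 4 * (1 - P 1 1) := add_sq_le hP 1
  have B2 : (P 1 0 + P 0 1) ^ 2 ≤ 4 * (1 - P 2 2) := add_sq_le hP 2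
  have tA0 := mul_sq_mul_le_mul_mul h1_nonneg g0 s0 (sq_nonneg _) A0
  have tA1 := mul_sq_mul_le_mul_mul h1_nonneg g1 s1 (sq_nonneg _) A1
  have tA2 := mul_sq_mul_le_mul_mul h1_nonneg g2 s2 (sq_nonneg _) A2
  have tB0 := mul_le_mul_of_nonneg_left (mul_le_mul d0 B0 (sq_nonneg _) h2_nonneg) h1_nonneg
  have tB1 := mul_le_mul_of_nonneg_left (mul_le_mul d1 B1 (sq_nonneg _) h2_nonneg) h1_nonneg
  have tB2 := mul_le_mul_of_nonneg_left (mul_le_mul d2 B2 (sq_nonneg _) h2_nonneg) h1_nonneg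
  have hw : h1 * ((1 + P 0 0 - P 1 1 - P 2 2) + (1 + P 1 1 - P 2 2 - P 0 0)
      + (1 + P 2 2 - P 0 0 - P 1 1)) ≤ (f2 + f3) * (1 + P 0 0 - P 1 1 - P 2 2)
      + (f3 + f1) * (1 + P 1 1 - P 2 2 - P 0 0) + (f1 + f2) * (1 + P 2 2 - P 0 0 - P 1 1) := by
    have w0 := mul_le_mul_of_nonneg_right g0 ((sq_nonneg _).trans A0)
    have w1 := mul_le_mul_of_nonneg_right g1 ((sq_nonneg _).trans A1)
    have w2 := mul_le_mul_of_nonneg_right g2 ((sq_nonneg _).trans A2)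
    linear_combination (w0 + w1 + w2) / 4
  linear_combination (tA0 + tA1 + tA2 + tB0 + tB1 + tB2) / 4 + h2 * hw
    + (h1 / 4) * four_mul_sum_sq_eq hP f1 f2 f3

end SO3

theorem vee_diagonal_mul_sub_transpose_mul (f : Fin 3 → ℝ) (P : Matrix (Fin 3) (Fin 3) ℝ) :
    vee (diagonal f * P - Pᵀ * diagonal f) =
      ![f 2 * P 2 1 - f 1 * P 1 2, f 0 * P 0 2 - f 2 * P 2 0, f 1 * P 1 0 - f 0 * P 0 1] := by
  ext i; fin_cases i <;> simp [vee, mul_comm]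

theorem enorm_sq (v : Fin 3 → ℝ) : _root_.enorm v ^ 2 = v 0 ^ 2 + v 1 ^ 2 + v 2 ^ 2 := by
  have hv : v ⬝ᵥ v = v 0 ^ 2 + v 1 ^ 2 + v 2 ^ 2 := by
    simp [dotProduct, Fin.sum_univ_three, sq]
  rw [_root_.enorm, hv, Real.sq_sqrt (by positivity)]

theorem config_error_lower_bound
    (f1 f2 f3 : ℝ) (hf1 : 0 ≤ f1) (hf2 : 0 ≤ f2) (hf3 : 0 ≤ f3)
    (P : Matrix (Fin 3) (Fin 3) ℝ) (hP : Pᵀ * P = 1) (hdet : P.det = 1)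
    (F : Matrix (Fin 3) (Fin 3) ℝ) (hF : F = Matrix.diagonal ![f1, f2, f3])
    (Φ : ℝ) (hΦ : Φ = (1/2) * (F * (1 - P)).trace)
    (eP : Fin 3 → ℝ) (heP : eP = (1/2 : ℝ) • vee (F * P - Pᵀ * F))
    (h1 h2 h3 : ℝ)
    (hh1 : h1 = min (f1 + f2) (min (f2 + f3) (f3 + f1)))
    (hh2 : h2 = max ((f1 - f2)^2) (max ((f2 - f3)^2) ((f3 - f1)^2)))
    (hh3 : h3 = max ((f1 + f2)^2) (max ((f2 + f3)^2) ((f3 + f1)^2))) :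
    (h1 / (h2 + h3)) * (_root_.enorm eP)^2 ≤ Φ := by
  have hSO : P ∈ SO(3) := ⟨(mem_orthogonalGroup_iff' _ _).2 hP, hdet⟩
  have hf : ∀ i, 0 ≤ ![f1, f2, f3] i := by simp [Fin.forall_fin_succ, *]
  have hE : _root_.enorm eP ^ 2 = ((f3 * P 2 1 - f2 * P 1 2) ^ 2 + (f1 * P 0 2 - f3 * P 2 0) ^ 2
      + (f2 * P 1 0 - f1 * P 0 1) ^ 2) / 4 := by
    rw [heP, hF, vee_diagonal_mul_sub_transpose_mul, enorm_sq]
    simp only [Pi.smul_apply, smul_eq_mul, cons_val_zero, cons_val_one, cons_val]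
    ring
  have hT : (F * (1 - P)).trace = f1 * (1 - P 0 0) + f2 * (1 - P 1 1) + f3 * (1 - P 2 2) := by
    simp [hF, trace, Fin.sum_univ_three]
  have key := SO3.mul_sum_sq_le hSO (f1 := f1) (f2 := f2) (f3 := f3) (h1 := h1) (h2 := h2)
    (h3 := h3) (by rw [hh1]; positivity) (by simp [hh1]) (by simp [hh2]) (by simp [hh3])
  rw [div_mul_eq_mul_div, hE]
  refine div_le_of_le_mul₀ (by rw [hh2, hh3]; positivity) ?_ (by rw [hΦ, hT]; linarith)
  rw [hΦ, hF]
  exact mul_nonneg (by norm_num) (trace_diagonal_mul_one_sub_nonneg hSO.1 hf)
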